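/- For ε ∈ (0,1) define u_ε : [−1,1] → ℝ by u_ε(x) = ε^{−3/2}·(x+ε) for x ∈ [−ε,0], u_ε(x) = ε^{−3/2}·(ε−x) for x ∈ [0,ε], and u_ε(x) = 0 otherwise, and set v_ε(x) := ∫_{−1}^x u_ε(t)² dt. Then as ε → 0⁺: (i) for every p ∈ [1,2), ∫_{−1}^1 |u_ε(x)|^p dx = 2·ε^{1−p/2}/(p+1) → 0; (ii) ∫_{−1}^1 |v_ε(x) − (2/3)·χ(x)| dx → 0, where χ is the characteristic function of (0,1]; (iii) ∫_{−1}^1 |v_ε(x)² − (4/9)·χ(x)| dx → 0; (iv) ∫_{−1}^1 |u_ε(x)·v_ε(x)| dx → 0. -/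

import Mathlib

/-!
For `ε > 0`, `u_ε x = ε^{-3/2} max 0 (ε - |x|)` is an even tent supported in `[-ε, ε]`, so
reflecting and translating reduces any integral of `φ (u_ε x)` over an interval containing
`[-ε, ε]` to `2 ∫₀^ε φ (ε^{-3/2} t) dt`. For `φ = |·|^p` this is `2 ε^{1-p/2} / (p+1)`, which gives
(i); for `p = 2` it shows that the increasing function `v_ε` is `0` left of `-ε` and `2/3` right of
`ε`. Hence the integrands of (ii)–(iv) vanish for `|x| ≥ ε` and are bounded by `2/3`, `4/9` and
`(2/3) ε^{-1/2}`, so the integrals are `O(ε)`, `O(ε)` and `O(ε^{1/2})`.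
-/

open MeasureTheory Set Filter Topology

/-- The regularizing family `u_ε` approximating (a primitive of) `δ'`:
`u_ε(x) = ε^{−3/2}(x+ε)` on `[−ε,0]`, `u_ε(x) = ε^{−3/2}(ε−x)` on `[0,ε]`, `0` otherwise. -/
noncomputable def uEps (ε x : ℝ) : ℝ :=
  if -ε ≤ x ∧ x ≤ 0 then ε ^ (-(3:ℝ)/2) * (x + ε)
  else if 0 ≤ x ∧ x ≤ ε then ε ^ (-(3:ℝ)/2) * (ε - x)
  else 0

/-- `v_ε(x) = ∫_{−1}^x u_ε(t)² dt`. -/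
noncomputable def vEps (ε x : ℝ) : ℝ := ∫ t in (-1:ℝ)..x, (uEps ε t) ^ 2

/-- The Heaviside-type function: `1` on `(0,1]`, `0` on `[−1,0]`. -/
noncomputable def heaviside (x : ℝ) : ℝ := if 0 < x then 1 else 0

open Real

theorem intervalIntegral_eq_of_eq_zero_of_le_abs {E : Type*} [NormedAddCommGroup E]
    [NormedSpace ℝ E] {f : ℝ → E} {ε a b : ℝ} (hε : 0 ≤ ε) (ha : a ≤ -ε) (hb : ε ≤ b)
    (hf : ∀ x, ε ≤ |x| → f x = 0) :
    ∫ x in a..b, f x = ∫ x in -ε..ε, f x := by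
  rw [intervalIntegral.integral_of_le (by linarith), intervalIntegral.integral_of_le (by linarith)]
  refine setIntegral_eq_of_subset_of_forall_sdiff_eq_zero measurableSet_Ioc
    (Ioc_subset_Ioc ha hb) fun x ⟨_, hx⟩ => hf x (le_abs'.2 ?_)
  rw [mem_Ioc, not_and_or, not_lt, not_le] at hx
  exact hx.imp id le_of_lt

theorem integral_abs_le_of_eq_zero_of_le_abs {g : ℝ → ℝ} {ε a b C : ℝ} (hε : 0 ≤ ε)
    (ha : a ≤ -ε) (hb : ε ≤ b) (hC : ∀ x, |g x| ≤ C) (hg : ∀ x, ε ≤ |x| → g x = 0) :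
    ∫ x in a..b, |g x| ≤ 2 * ε * C := by
  rw [intervalIntegral_eq_of_eq_zero_of_le_abs hε ha hb fun x hx => by rw [hg x hx, abs_zero]]
  calc ∫ x in -ε..ε, |g x| ≤ ‖∫ x in -ε..ε, |g x|‖ := Real.le_norm_self _
    _ ≤ C * |ε - -ε| :=
      intervalIntegral.norm_integral_le_of_norm_le_const fun x _ => by simpa using hC x
    _ = 2 * ε * C := by rw [abs_of_nonneg (by linarith)]; ring

theorem tendsto_integral_abs_of_eq_zero_of_le_abs {g : ℝ → ℝ → ℝ} {C : ℝ → ℝ}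
    (hC : Tendsto (fun ε => ε * C ε) (𝓝[>] 0) (𝓝 0))
    (hbound : ∀ ε ∈ Ioo (0:ℝ) 1, ∀ x, |g ε x| ≤ C ε)
    (hsupp : ∀ ε ∈ Ioo (0:ℝ) 1, ∀ x, ε ≤ |x| → g ε x = 0) :
    Tendsto (fun ε => ∫ x in (-1:ℝ)..1, |g ε x|) (𝓝[>] 0) (𝓝 0) := by
  refine squeeze_zero' (g := fun ε => 2 * ε * C ε) (Eventually.of_forall fun ε =>
      intervalIntegral.integral_nonneg (by norm_num) fun x _ => abs_nonneg _)
    (eventually_of_mem (Ioo_mem_nhdsGT one_pos) fun ε hε => ?_)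
    (by simpa [mul_assoc] using hC.const_mul 2)
  exact integral_abs_le_of_eq_zero_of_le_abs hε.1.le (by linarith [hε.2]) hε.2.le (hbound ε hε)
    (hsupp ε hε)

theorem tendsto_rpow_nhdsGT_zero {q : ℝ} (hq : 0 < q) :
    Tendsto (fun ε : ℝ => ε ^ q) (𝓝[>] 0) (𝓝 0) := by
  simpa [zero_rpow hq.ne'] using
    (continuousAt_rpow_const 0 q (Or.inr hq.le)).tendsto.mono_left nhdsWithin_le_nhds

theorem uEps_eq_mul_max (ε x : ℝ) : uEps ε x = ε ^ (-(3:ℝ)/2) * max 0 (ε - |x|) := by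
  unfold uEps
  split_ifs with h₁ h₂
  · rw [abs_of_nonpos h₁.2, max_eq_right (by linarith [h₁.1])]; ring
  · rw [abs_of_nonneg h₂.1, max_eq_right (by linarith [h₂.2])]
  · rw [max_eq_left, mul_zero]
    rcases le_total x 0 with hx | hx
    · rw [abs_of_nonpos hx]; by_contra! h; exact h₁ ⟨by linarith, hx⟩
    · rw [abs_of_nonneg hx]; by_contra! h; exact h₂ ⟨hx, by linarith⟩

theorem continuous_uEps (ε : ℝ) : Continuous (uEps ε) := by
  rw [show uEps ε = _ from funext (uEps_eq_mul_max ε)]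
  fun_prop

theorem uEps_neg (ε x : ℝ) : uEps ε (-x) = uEps ε x := by
  simp only [uEps_eq_mul_max, abs_neg]

theorem uEps_eq_zero {ε x : ℝ} (hx : ε ≤ |x|) : uEps ε x = 0 := by
  rw [uEps_eq_mul_max, max_eq_left (by linarith), mul_zero]

theorem uEps_of_mem_Icc {ε x : ℝ} (hx : x ∈ Icc 0 ε) : uEps ε x = ε ^ (-(3:ℝ)/2) * (ε - x) := by
  rw [uEps_eq_mul_max, abs_of_nonneg hx.1, max_eq_right (sub_nonneg.2 hx.2)]

theorem uEps_nonneg {ε : ℝ} (hε : 0 ≤ ε) (x : ℝ) : 0 ≤ uEps ε x := by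
  rw [uEps_eq_mul_max]
  exact mul_nonneg (rpow_nonneg hε _) (le_max_left _ _)

theorem abs_uEps_le {ε : ℝ} (hε : 0 < ε) (x : ℝ) : |uEps ε x| ≤ ε ^ (-(1:ℝ)/2) := by
  rw [abs_of_nonneg (uEps_nonneg hε.le x), uEps_eq_mul_max]
  calc ε ^ (-(3:ℝ)/2) * max 0 (ε - |x|) ≤ ε ^ (-(3:ℝ)/2) * ε :=
        mul_le_mul_of_nonneg_left (max_le hε.le (by linarith [abs_nonneg x]))
          (rpow_nonneg hε.le _)
    _ = ε ^ (-(1:ℝ)/2) := by rw [← rpow_add_one hε.ne']; norm_num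

theorem integral_comp_uEps {φ : ℝ → ℝ} (hφ : Continuous φ) (hφ0 : φ 0 = 0) {ε a b : ℝ}
    (hε : 0 ≤ ε) (ha : a ≤ -ε) (hb : ε ≤ b) :
    ∫ x in a..b, φ (uEps ε x) = 2 * ∫ t in (0:ℝ)..ε, φ (ε ^ (-(3:ℝ)/2) * t) := by
  have hint (c d : ℝ) : IntervalIntegrable (fun x => φ (uEps ε x)) volume c d :=
    (hφ.comp (continuous_uEps ε)).intervalIntegrable c d
  have hsupp : ∫ x in a..b, φ (uEps ε x) = ∫ x in -ε..ε, φ (uEps ε x) := by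
    refine intervalIntegral_eq_of_eq_zero_of_le_abs hε ha hb fun x hx => ?_
    rw [uEps_eq_zero hx, hφ0]
  have hleft : ∫ x in -ε..0, φ (uEps ε x) = ∫ x in 0..ε, φ (uEps ε x) := by
    simpa [uEps_neg] using (intervalIntegral.integral_comp_neg (a := 0) (b := ε)
      (fun x => φ (uEps ε x))).symm
  have hright : ∫ x in 0..ε, φ (uEps ε x) = ∫ t in 0..ε, φ (ε ^ (-(3:ℝ)/2) * t) := by
    rw [intervalIntegral.integral_congr (g := fun x => φ (ε ^ (-(3:ℝ)/2) * (ε - x)))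
      fun x hx => by rw [uIcc_of_le hε] at hx; simp only [uEps_of_mem_Icc hx]]
    simpa using intervalIntegral.integral_comp_sub_left (a := 0) (b := ε)
      (fun t => φ (ε ^ (-(3:ℝ)/2) * t)) ε
  rw [hsupp, ← intervalIntegral.integral_add_adjacent_intervals (hint _ 0) (hint 0 _), hleft,
    hright, two_mul]

theorem integral_abs_uEps_rpow {p ε a b : ℝ} (hp : 0 < p) (hε : 0 < ε) (ha : a ≤ -ε)
    (hb : ε ≤ b) : ∫ x in a..b, |uEps ε x| ^ p = 2 * ε ^ (1 - p / 2) / (p + 1) := by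
  rw [integral_comp_uEps (φ := fun t => |t| ^ p) ((continuous_rpow_const hp.le).comp
    continuous_abs) (by simp [zero_rpow hp.ne']) hε.le ha hb]
  rw [intervalIntegral.integral_congr (g := fun t => ε ^ (-(3:ℝ)/2 * p) * t ^ p) fun t ht => by
    rw [uIcc_of_le hε.le] at ht
    simp only
    rw [abs_of_nonneg (mul_nonneg (rpow_nonneg hε.le _) ht.1),
      mul_rpow (rpow_nonneg hε.le _) ht.1, ← rpow_mul hε.le]]
  rw [intervalIntegral.integral_const_mul, integral_rpow (Or.inl (by linarith)),
    zero_rpow (by linarith), sub_zero, mul_div_assoc', ← rpow_add hε]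
  ring_nf

theorem tendsto_integral_abs_uEps_rpow {p : ℝ} (hp : 0 < p) (hp2 : p < 2) :
    Tendsto (fun ε => ∫ x in (-1:ℝ)..1, |uEps ε x| ^ p) (𝓝[>] 0) (𝓝 0) := by
  have hlim : Tendsto (fun ε : ℝ => 2 * ε ^ (1 - p / 2) / (p + 1)) (𝓝[>] 0) (𝓝 0) := by
    simpa using ((tendsto_rpow_nhdsGT_zero (by linarith : 0 < 1 - p / 2)).const_mul 2).div_const
      (p + 1)
  refine hlim.congr' (eventually_of_mem (Ioo_mem_nhdsGT one_pos) fun ε hε => ?_)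
  exact (integral_abs_uEps_rpow hp hε.1 (by linarith [hε.2]) hε.2.le).symm

theorem vEps_eq_zero_of_le_neg {ε x : ℝ} (hε1 : ε ≤ 1) (hx : x ≤ -ε) : vEps ε x = 0 := by
  rw [vEps, intervalIntegral.integral_congr (g := fun _ => 0) fun t ht => ?_,
    intervalIntegral.integral_zero]
  have ht' : t ≤ -ε := ht.2.trans (max_le (by linarith) hx)
  simp [uEps_eq_zero (le_abs'.2 (Or.inl ht'))]

theorem vEps_eq_two_div_three_of_le {ε x : ℝ} (hε : 0 < ε) (hε1 : ε ≤ 1) (hx : ε ≤ x) :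
    vEps ε x = 2 / 3 := by
  have h := integral_abs_uEps_rpow two_pos hε (neg_le_neg hε1) hx
  simp_rw [rpow_two, sq_abs] at h
  rw [vEps, h]
  norm_num

theorem vEps_monotone (ε : ℝ) : Monotone (vEps ε) := by
  intro x y hxy
  have hint (c d : ℝ) : IntervalIntegrable (fun t => uEps ε t ^ 2) volume c d :=
    ((continuous_uEps ε).pow 2).intervalIntegrable c d
  rw [vEps, vEps, ← sub_nonneg, intervalIntegral.integral_interval_sub_left (hint _ _) (hint _ _)]
  exact intervalIntegral.integral_nonneg hxy fun t _ => sq_nonneg _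

theorem vEps_mem_Icc {ε : ℝ} (hε : 0 < ε) (hε1 : ε ≤ 1) (x : ℝ) : vEps ε x ∈ Icc 0 (2 / 3) :=
  ⟨(vEps_eq_zero_of_le_neg hε1 (min_le_right x (-ε))).symm.le.trans
      (vEps_monotone ε (min_le_left _ _)),
    (vEps_monotone ε (le_max_left x ε)).trans
      (vEps_eq_two_div_three_of_le hε hε1 (le_max_right _ _)).le⟩

theorem vEps_eq_heaviside {ε x : ℝ} (hε : 0 < ε) (hε1 : ε ≤ 1) (hx : ε ≤ |x|) :
    vEps ε x = 2 / 3 * heaviside x := by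
  rcases le_abs'.1 hx with hx | hx
  · rw [vEps_eq_zero_of_le_neg hε1 hx, heaviside, if_neg (by linarith), mul_zero]
  · rw [vEps_eq_two_div_three_of_le hε hε1 hx, heaviside, if_pos (by linarith), mul_one]

theorem tendsto_integral_abs_vEps_sub_heaviside :
    Tendsto (fun ε => ∫ x in (-1:ℝ)..1, |vEps ε x - 2 / 3 * heaviside x|) (𝓝[>] 0) (𝓝 0) := by
  refine tendsto_integral_abs_of_eq_zero_of_le_abs (C := fun _ => 2 / 3)
    (tendsto_nhdsWithin_of_tendsto_nhds ((continuous_mul_const _).tendsto' 0 0 (zero_mul _)))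
    (fun ε hε x => ?_) fun ε hε x hx => ?_
  · have hv := vEps_mem_Icc hε.1 hε.2.le x
    rw [abs_le, heaviside]
    split_ifs <;> constructor <;> linarith [hv.1, hv.2]
  · rw [vEps_eq_heaviside hε.1 hε.2.le hx, sub_self]

theorem tendsto_integral_abs_sq_vEps_sub_heaviside :
    Tendsto (fun ε => ∫ x in (-1:ℝ)..1, |vEps ε x ^ 2 - 4 / 9 * heaviside x|) (𝓝[>] 0) (𝓝 0) := by
  refine tendsto_integral_abs_of_eq_zero_of_le_abs (C := fun _ => 4 / 9)
    (tendsto_nhdsWithin_of_tendsto_nhds ((continuous_mul_const _).tendsto' 0 0 (zero_mul _)))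
    (fun ε hε x => ?_) fun ε hε x hx => ?_
  · have hv := vEps_mem_Icc hε.1 hε.2.le x
    rw [abs_le, heaviside]
    split_ifs <;> constructor <;> nlinarith [hv.1, hv.2]
  · rw [vEps_eq_heaviside hε.1 hε.2.le hx, heaviside]
    split_ifs <;> norm_num

theorem tendsto_integral_abs_uEps_mul_vEps :
    Tendsto (fun ε => ∫ x in (-1:ℝ)..1, |uEps ε x * vEps ε x|) (𝓝[>] 0) (𝓝 0) := by
  have hC : Tendsto (fun ε : ℝ => ε * (ε ^ (-(1:ℝ)/2) * (2 / 3))) (𝓝[>] 0) (𝓝 0) := by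
    have h := (tendsto_rpow_nhdsGT_zero one_half_pos).mul_const (2 / 3 : ℝ)
    rw [zero_mul] at h
    refine h.congr' (eventually_of_mem self_mem_nhdsWithin fun ε (hε : 0 < ε) => ?_)
    dsimp only
    rw [← mul_assoc, mul_comm ε, ← rpow_add_one hε.ne']
    norm_num
  refine tendsto_integral_abs_of_eq_zero_of_le_abs hC (fun ε hε x => ?_) fun ε hε x hx => ?_
  · have hv := vEps_mem_Icc hε.1 hε.2.le x
    rw [abs_mul, abs_of_nonneg hv.1]
    exact mul_le_mul (abs_uEps_le hε.1 x) hv.2 hv.1 (rpow_nonneg hε.1.le _)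
  · rw [uEps_eq_zero hx, zero_mul]

/-- **Limits of the `δ'`-regularization** (computations of §1.5): as `ε → 0⁺`,
(i) `∫|u_ε|^p = 2ε^{1−p/2}/(p+1) → 0` for `1 ≤ p < 2`;
(ii) `v_ε → (2/3)χ` in `L¹(−1,1)`;
(iii) `v_ε² → (4/9)χ` in `L¹(−1,1)`;
(iv) `∫|u_ε v_ε| → 0`. -/
theorem delta_prime_regularization_limits :
    (∀ p : ℝ, 1 ≤ p → p < 2 →
      (∀ ε : ℝ, 0 < ε → ε < 1 →
        (∫ x in (-1:ℝ)..1, |uEps ε x| ^ p) = 2 * ε ^ (1 - p / 2) / (p + 1)) ∧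
      Tendsto (fun ε : ℝ => ∫ x in (-1:ℝ)..1, |uEps ε x| ^ p)
        (𝓝[>] 0) (𝓝 0)) ∧
    Tendsto (fun ε : ℝ => ∫ x in (-1:ℝ)..1, |vEps ε x - (2/3) * heaviside x|)
      (𝓝[>] 0) (𝓝 0) ∧
    Tendsto (fun ε : ℝ => ∫ x in (-1:ℝ)..1, |(vEps ε x) ^ 2 - (4/9) * heaviside x|)
      (𝓝[>] 0) (𝓝 0) ∧
    Tendsto (fun ε : ℝ => ∫ x in (-1:ℝ)..1, |uEps ε x * vEps ε x|)
      (𝓝[>] 0) (𝓝 0) := by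
  refine ⟨fun p hp1 hp2 => ⟨fun ε hε hε1 => ?_, ?_⟩, tendsto_integral_abs_vEps_sub_heaviside,
    tendsto_integral_abs_sq_vEps_sub_heaviside, tendsto_integral_abs_uEps_mul_vEps⟩
  · exact integral_abs_uEps_rpow (by linarith) hε (by linarith) hε1.le
  · exact tendsto_integral_abs_uEps_rpow (by linarith) hp2
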